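/- Let d ≥ 1, let f : {−1,1}^d → {−1,1}, let A be a family of subsets of {1,…,d}, and let Z : A → ℝ. Define the hypothesis h : {−1,1}^d → {−1,1} by h(x) = 1 if Σ_{S∈A} Z_S·χ_S(x) ≥ 0 and h(x) = −1 otherwise. Then P_{x ~ unif({−1,1}^d)}[f(x) ≠ h(x)] ≤ Σ_{S∈A} (f̂(S) − Z_S)² + Σ_{S∉A} f̂(S)². -/
import Mathlib


open Finset

/-- The value in `{-1,1} ⊆ ℝ` encoded by a Boolean coordinate. -/
def pmv (b : Bool) : ℝ := if b then 1 else -1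

/-- The parity function `χ_S(x) = ∏_{i ∈ S} x_i` on `{-1,1}^d`. -/
def chi {d : ℕ} (S : Finset (Fin d)) (x : Fin d → Bool) : ℝ := ∏ i ∈ S, pmv (x i)

/-- The Fourier coefficient `f̂(S) = 2^{-d} Σ_x f(x) χ_S(x)`. -/
noncomputable def fhat {d : ℕ} (f : (Fin d → Bool) → ℝ) (S : Finset (Fin d)) : ℝ :=
  (∑ x : Fin d → Bool, f x * chi S x) / 2 ^ d

lemma pmv_sq (b : Bool) : pmv b * pmv b = 1 := by cases b <;> simp [pmv]

lemma dual_orth {d : ℕ} (x y : Fin d → Bool) :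
    ∑ S : Finset (Fin d), chi S x * chi S y = if x = y then (2:ℝ)^d else 0 := by
  have h : ∑ S : Finset (Fin d), chi S x * chi S y
      = ∏ i : Fin d, (pmv (x i) * pmv (y i) + 1) := by
    rw [Finset.prod_add, ← Finset.powerset_univ]
    apply Finset.sum_congr rfl
    intro S _
    simp [chi, Finset.prod_mul_distrib]
  rw [h]
  by_cases hxy : x = y
  · subst hxy
    simp only [pmv_sq, if_pos rfl]
    norm_num
  · rw [if_neg hxy]
    obtain ⟨i, hi⟩ := Function.ne_iff.mp hxy
    apply Finset.prod_eq_zero (Finset.mem_univ i)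
    cases hx : x i <;> cases hy : y i <;> simp_all [pmv]

lemma chi_eq_prod_ite {d : ℕ} (S : Finset (Fin d)) (x : Fin d → Bool) :
    chi S x = ∏ i : Fin d, (if i ∈ S then pmv (x i) else 1) := by
  rw [Finset.prod_ite_mem, Finset.univ_inter, chi]

lemma primal_orth {d : ℕ} (S T : Finset (Fin d)) :
    ∑ x : Fin d → Bool, chi S x * chi T x = if S = T then (2:ℝ)^d else 0 := by
  have key : ∑ x : Fin d → Bool, chi S x * chi T x
      = ∏ i : Fin d, ∑ b : Bool,
          (if i ∈ S then pmv b else 1) * (if i ∈ T then pmv b else 1) := by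
    rw [Finset.prod_univ_sum, Fintype.piFinset_univ]
    apply Finset.sum_congr rfl
    intro x _
    rw [chi_eq_prod_ite, chi_eq_prod_ite, ← Finset.prod_mul_distrib]
  rw [key]
  by_cases hst : S = T
  · subst hst
    rw [if_pos rfl]
    rw [Finset.prod_congr rfl (fun i _ => ?_), Finset.prod_const, Finset.card_univ,
      Fintype.card_fin]
    by_cases hiS : i ∈ S <;> simp [hiS, Fintype.sum_bool, pmv] <;> norm_num
  · rw [if_neg hst]
    have : ∃ i, (i ∈ S ∧ i ∉ T) ∨ (i ∈ T ∧ i ∉ S) := by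
      by_contra hcon
      push_neg at hcon
      apply hst
      ext i
      have := hcon i
      tauto
    obtain ⟨i, hi⟩ := this
    apply Finset.prod_eq_zero (Finset.mem_univ i)
    rcases hi with ⟨h1, h2⟩ | ⟨h1, h2⟩ <;>
      simp [h1, h2, Fintype.sum_bool, pmv]

theorem stmt16 (d : ℕ) (hd : 1 ≤ d) (f : (Fin d → Bool) → ℝ)
    (hf : ∀ x, f x = 1 ∨ f x = -1)
    (A : Finset (Finset (Fin d))) (Z : Finset (Fin d) → ℝ) :
    ((Finset.univ.filter fun x : Fin d → Bool =>
        f x ≠ (if 0 ≤ ∑ S ∈ A, Z S * chi S x then (1 : ℝ) else -1)).card : ℝ) / 2 ^ d ≤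
      (∑ S ∈ A, (fhat f S - Z S) ^ 2) +
        ∑ S ∈ Finset.univ \ A, (fhat f S) ^ 2 := by
  have h2d : (0:ℝ) < 2 ^ d := by positivity
  set g : (Fin d → Bool) → ℝ := fun x => ∑ S ∈ A, Z S * chi S x with hg
  set e : (Fin d → Bool) → ℝ := fun x => f x - g x with he
  set c : Finset (Fin d) → ℝ := fun S => fhat f S - (if S ∈ A then Z S else 0) with hc
  -- Step A: card ≤ Σ_x e x ^ 2
  have hA : ((Finset.univ.filter fun x : Fin d → Bool =>
        f x ≠ (if 0 ≤ ∑ S ∈ A, Z S * chi S x then (1 : ℝ) else -1)).card : ℝ)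
      ≤ ∑ x : Fin d → Bool, e x ^ 2 := by
    rw [Finset.card_filter]
    push_cast
    refine Finset.sum_le_sum fun x _ => ?_
    have hEx : e x = f x - ∑ S ∈ A, Z S * chi S x := rfl
    by_cases h0 : 0 ≤ ∑ S ∈ A, Z S * chi S x
    · rw [if_pos h0]
      rcases hf x with h1 | h1
      · rw [if_neg (by simp [h1])]
        positivity
      · rw [if_pos (by rw [h1]; norm_num)]
        have hE : e x = -1 - ∑ S ∈ A, Z S * chi S x := by rw [hEx, h1]
        nlinarith
    · rw [if_neg h0]
      rcases hf x with h1 | h1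
      · rw [if_pos (by rw [h1]; norm_num)]
        have hE : e x = 1 - ∑ S ∈ A, Z S * chi S x := by rw [hEx, h1]
        push_neg at h0
        nlinarith
      · rw [if_neg (by simp [h1])]
        positivity
  -- the unnormalized Fourier coefficients of e
  have hB1 : ∀ S : Finset (Fin d), ∑ x : Fin d → Bool, e x * chi S x = 2 ^ d * c S := by
    intro S
    have hsplit : ∑ x : Fin d → Bool, e x * chi S x
        = (∑ x : Fin d → Bool, f x * chi S x) - ∑ x : Fin d → Bool, g x * chi S x := by
      rw [← Finset.sum_sub_distrib]
      exact Finset.sum_congr rfl fun x _ => by rw [he]; ring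
    rw [hsplit]
    have hfs : ∑ x : Fin d → Bool, f x * chi S x = 2 ^ d * fhat f S := by
      rw [fhat]; field_simp
    have hgs : ∑ x : Fin d → Bool, g x * chi S x
        = if S ∈ A then 2 ^ d * Z S else 0 := by
      have h1 : ∀ x : Fin d → Bool, g x * chi S x = ∑ T ∈ A, Z T * (chi T x * chi S x) := by
        intro x
        rw [hg, Finset.sum_mul]
        exact Finset.sum_congr rfl fun T _ => by ring
      rw [Finset.sum_congr rfl fun x _ => h1 x, Finset.sum_comm]
      rw [Finset.sum_congr rfl (fun T _ => ?_)]
      · rw [Finset.sum_ite_eq' A S (fun T => 2 ^ d * Z T)]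
      · rw [← Finset.mul_sum, primal_orth]
        split_ifs with h
        · subst h; ring
        · ring
    rw [hfs, hgs]
    simp only [hc]
    split_ifs with h <;> ring
  -- Parseval
  have hB2 : ∑ S : Finset (Fin d), (∑ x : Fin d → Bool, e x * chi S x) ^ 2
      = 2 ^ d * ∑ x : Fin d → Bool, e x ^ 2 := by
    have step1 : ∀ S : Finset (Fin d), (∑ x : Fin d → Bool, e x * chi S x) ^ 2
        = ∑ x : Fin d → Bool,
            e x * ((∑ y : Fin d → Bool, e y * chi S y) * chi S x) := by
      intro S
      rw [sq, Finset.mul_sum]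
      exact Finset.sum_congr rfl fun x _ => by ring
    rw [Finset.sum_congr rfl fun S _ => step1 S, Finset.sum_comm]
    have step2 : ∀ x : Fin d → Bool,
        ∑ S : Finset (Fin d), e x * ((∑ y : Fin d → Bool, e y * chi S y) * chi S x)
          = 2 ^ d * e x ^ 2 := by
      intro x
      rw [← Finset.mul_sum]
      have hinv : ∑ S : Finset (Fin d), (∑ y : Fin d → Bool, e y * chi S y) * chi S x
          = 2 ^ d * e x := by
        have h1 : ∀ S : Finset (Fin d), (∑ y : Fin d → Bool, e y * chi S y) * chi S x
            = ∑ y : Fin d → Bool, e y * (chi S y * chi S x) := by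
          intro S
          rw [Finset.sum_mul]
          exact Finset.sum_congr rfl fun y _ => by ring
        rw [Finset.sum_congr rfl fun S _ => h1 S, Finset.sum_comm]
        rw [Finset.sum_congr rfl fun y _ => by rw [← Finset.mul_sum, dual_orth]]
        simp only [mul_ite, mul_zero]
        rw [Finset.sum_ite_eq' Finset.univ x (fun y => e y * 2 ^ d)]
        simp [mul_comm]
      rw [hinv]; ring
    rw [Finset.sum_congr rfl fun x _ => step2 x, ← Finset.mul_sum]
  -- conclude
  have key : ∑ x : Fin d → Bool, e x ^ 2 = 2 ^ d * ∑ S : Finset (Fin d), c S ^ 2 := by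
    have : ∑ S : Finset (Fin d), (∑ x : Fin d → Bool, e x * chi S x) ^ 2
        = (2 ^ d) ^ 2 * ∑ S : Finset (Fin d), c S ^ 2 := by
      rw [Finset.mul_sum]
      exact Finset.sum_congr rfl fun S _ => by rw [hB1]; ring
    rw [this] at hB2
    have h2 : ((2:ℝ) ^ d) ≠ 0 := ne_of_gt h2d
    apply mul_left_cancel₀ h2
    rw [← hB2]; ring
  have hsum : ∑ S : Finset (Fin d), c S ^ 2
      = (∑ S ∈ A, (fhat f S - Z S) ^ 2) + ∑ S ∈ Finset.univ \ A, (fhat f S) ^ 2 := by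
    rw [← Finset.sum_sdiff (Finset.subset_univ A)]
    rw [add_comm]
    congr 1
    · refine Finset.sum_congr rfl fun S hS => ?_
      simp only [hc]
      rw [if_pos hS]
    · refine Finset.sum_congr rfl fun S hS => ?_
      simp only [hc]
      rw [if_neg (Finset.mem_sdiff.mp hS).2, sub_zero]
  rw [← hsum]
  rw [div_le_iff₀ h2d]
  calc ((Finset.univ.filter fun x : Fin d → Bool =>
        f x ≠ (if 0 ≤ ∑ S ∈ A, Z S * chi S x then (1 : ℝ) else -1)).card : ℝ)
      ≤ ∑ x : Fin d → Bool, e x ^ 2 := hA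
    _ = (∑ S : Finset (Fin d), c S ^ 2) * 2 ^ d := by rw [key]; ring
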